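/- Let Ω ⊆ ℝ^N be a bounded open set, A a nonempty bounded subset with closure(A) ⊆ Ω and Lebesgue measure zero, p > 1, and γ > 0. If γ < (1/p)(N − upper box dimension of A), then the function x ↦ d(x,A)^(−γ) belongs to L^p(Ω). -/

import Mathlib

open Metric Filter Set MeasureTheory


/-- The least number of open balls of radius `δ` needed to cover `A`
(defined as `0` by convention if no finite cover exists). -/
noncomputable def coveringNumber {X : Type*} [PseudoMetricSpace X] (δ : ℝ) (A : Set X) : ℕ :=
  sInf {n : ℕ | ∃ t : Finset X, t.card = n ∧ A ⊆ ⋃ x ∈ t, Metric.ball x δ}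

/-- Upper box (Minkowski) dimension of a set in a metric space. -/
noncomputable def upperBoxDim {X : Type*} [PseudoMetricSpace X] (A : Set X) : ℝ :=
  Filter.limsup (fun δ : ℝ => Real.log (coveringNumber δ A : ℝ) / Real.log (1 / δ))
    (nhdsWithin 0 (Set.Ioi 0))

/-- Lower box (Minkowski) dimension of a set in a metric space. -/
noncomputable def lowerBoxDim {X : Type*} [PseudoMetricSpace X] (A : Set X) : ℝ :=
  Filter.liminf (fun δ : ℝ => Real.log (coveringNumber δ A : ℝ) / Real.log (1 / δ))
    (nhdsWithin 0 (Set.Ioi 0))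

/-!
If `s` exceeds the upper box dimension of `A`, then `A` is covered by at most `δ ^ (-s)` balls of
radius `δ` for small `δ`, so the `ρ`-neighbourhood of `A` has measure `O(ρ ^ (N - s))`. By the
layer-cake formula, `∫_Ω d(x, A) ^ (-p γ)` is then at most
`|Ω| T + C ∫_T^∞ t ^ (-(N - s) / (p γ)) dt`, which is finite as soon as `p γ < N - s`.
-/

open Module
open scoped ENNReal NNReal Topology

section CoveringNumber

variable {X : Type*} [PseudoMetricSpace X] {A : Set X} {δ : ℝ}

theorem coveringNumber_le_card (t : Finset X) (h : A ⊆ ⋃ x ∈ t, ball x δ) :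
    coveringNumber δ A ≤ t.card :=
  Nat.sInf_le ⟨t, rfl, h⟩

theorem exists_finset_card_eq_coveringNumber (hA : TotallyBounded A) (hδ : 0 < δ) :
    ∃ t : Finset X, t.card = coveringNumber δ A ∧ A ⊆ ⋃ x ∈ t, ball x δ := by
  obtain ⟨s, hs, hcov⟩ := totallyBounded_iff.1 hA δ hδ
  have hne : {n : ℕ | ∃ t : Finset X, t.card = n ∧ A ⊆ ⋃ x ∈ t, ball x δ}.Nonempty :=
    ⟨_, hs.toFinset, rfl, by simpa using hcov⟩
  exact Nat.sInf_mem hne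

/-- A maximal `δ / 2`-separated subset of `A` is a `δ`-net of `A`. -/
theorem coveringNumber_le_of_forall_separated_card_le (hA : TotallyBounded A) (hδ : 0 < δ)
    {M : ℕ} (hM : ∀ t : Finset X, ↑t ⊆ A →
      (t : Set X).Pairwise (fun x y => δ / 2 < dist x y) → t.card ≤ M) :
    coveringNumber δ A ≤ M := by
  set ε : ℝ≥0 := (δ / 2).toNNReal
  have hε : (ε : ℝ) = δ / 2 := Real.coe_toNNReal _ (by positivity)
  have hpack : packingNumber ε A ≠ ⊤ := by
    obtain ⟨C, -, hCfin, hCcov⟩ :=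
      exists_finite_isCover_of_totallyBounded (ε := ε / 2) (by simp [ε, hδ]) hA
    refine ne_top_of_le_ne_top hCfin.encard_lt_top.ne ?_
    calc packingNumber ε A = packingNumber (2 * (ε / 2)) A := by
          rw [mul_div_cancel₀ _ two_ne_zero]
      _ ≤ externalCoveringNumber (ε / 2) A := packingNumber_two_mul_le_externalCoveringNumber _ _
      _ ≤ C.encard := hCcov.externalCoveringNumber_le_encard
  set S := maximalSeparatedSet ε A
  have hSfin : S.Finite := Set.encard_ne_top_iff.1 (encard_maximalSeparatedSet hpack ▸ hpack)
  calc coveringNumber δ A ≤ hSfin.toFinset.card := by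
        refine coveringNumber_le_card _ fun a ha => ?_
        obtain ⟨c, hcS, hac⟩ := mem_iUnion₂.1
          ((isCover_maximalSeparatedSet hpack).subset_iUnion_closedBall ha)
        exact mem_iUnion₂.2
          ⟨c, hSfin.mem_toFinset.2 hcS, closedBall_subset_ball (by linarith) (hε ▸ hac)⟩
    _ ≤ M := by
        refine hM _ (by simpa using maximalSeparatedSet_subset) fun x hx y hy hxy => ?_
        have hsep : (ε : ℝ≥0∞) < edist x y := isSeparated_maximalSeparatedSet
          (hSfin.mem_toFinset.1 hx) (hSfin.mem_toFinset.1 hy) hxy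
        rwa [edist_dist, ← ENNReal.ofReal_coe_nnreal, hε,
          ENNReal.ofReal_lt_ofReal_iff_of_nonneg (by positivity)] at hsep

end CoveringNumber

theorem log_div_log_one_div_le_iff {x δ s : ℝ} (hx : 0 < x) (hδ0 : 0 < δ) (hδ1 : δ < 1) :
    Real.log x / Real.log (1 / δ) ≤ s ↔ x ≤ δ ^ (-s) := by
  rw [div_le_iff₀ (Real.log_pos (one_lt_one_div hδ0 hδ1)), ← Real.log_rpow (by positivity),
    Real.log_le_log_iff hx (by positivity), one_div, Real.inv_rpow hδ0.le, Real.rpow_neg hδ0.le]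

section AddHaar

variable {E : Type*} [NormedAddCommGroup E] [MeasurableSpace E] [BorelSpace E]
  (μ : Measure E) [μ.IsAddHaarMeasure] {A : Set E}

theorem measure_thickening_le_coveringNumber_mul {δ : ℝ} (hA : TotallyBounded A) (hδ : 0 < δ) :
    μ (thickening δ A) ≤ coveringNumber δ A * μ (ball 0 (2 * δ)) := by
  obtain ⟨t, ht, hcov⟩ := exists_finset_card_eq_coveringNumber hA hδ
  have hsub : thickening δ A ⊆ ⋃ y ∈ t, ball y (2 * δ) := by
    intro x hx
    obtain ⟨a, ha, hxa⟩ := mem_thickening_iff.1 hx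
    obtain ⟨y, hy, hay⟩ := mem_iUnion₂.1 (hcov ha)
    exact mem_iUnion₂.2 ⟨y, hy, by rw [mem_ball] at *; linarith [dist_triangle x a y]⟩
  calc μ (thickening δ A) ≤ ∑ y ∈ t, μ (ball y (2 * δ)) :=
        (measure_mono hsub).trans (measure_biUnion_finset_le _ _)
    _ = coveringNumber δ A * μ (ball 0 (2 * δ)) := by
        simp only [Measure.addHaar_ball_center μ, Finset.sum_const, ht, nsmul_eq_mul]

end AddHaar

section FiniteDimensional

variable {E : Type*} [NormedAddCommGroup E] [NormedSpace ℝ E] [FiniteDimensional ℝ E] {A : Set E}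

theorem card_mul_pow_le_of_pairwise_le_dist (t : Finset E) {x : E} {R r : ℝ} (hR : 0 ≤ R)
    (hr : 0 < r) (ht : ↑t ⊆ closedBall x R)
    (hsep : (t : Set E).Pairwise fun a b => 2 * r ≤ dist a b) :
    (t.card : ℝ) * r ^ finrank ℝ E ≤ (R + r) ^ finrank ℝ E := by
  borelize E
  let μ : Measure E := Measure.addHaar
  have hdisj : (t : Set E).PairwiseDisjoint fun c => ball c r :=
    fun a ha b hb hab => ball_disjoint_ball (by linarith [hsep ha hb hab])
  have hsub : ⋃ c ∈ t, ball c r ⊆ ball x (R + r) :=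
    iUnion₂_subset fun c hc => ball_subset_ball' (by linarith [mem_closedBall.1 (ht hc)])
  have hvol : (t.card : ℝ≥0∞) * ENNReal.ofReal (r ^ finrank ℝ E) * μ (ball 0 1) ≤
      ENNReal.ofReal ((R + r) ^ finrank ℝ E) * μ (ball 0 1) :=
    calc (t.card : ℝ≥0∞) * ENNReal.ofReal (r ^ finrank ℝ E) * μ (ball 0 1)
        = μ (⋃ c ∈ t, ball c r) := by
          rw [measure_biUnion_finset hdisj fun _ _ => measurableSet_ball]
          simp only [μ.addHaar_ball_of_pos _ hr, Finset.sum_const, nsmul_eq_mul, mul_assoc]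
      _ ≤ μ (ball x (R + r)) := measure_mono hsub
      _ = ENNReal.ofReal ((R + r) ^ finrank ℝ E) * μ (ball 0 1) :=
          μ.addHaar_ball_of_pos _ (by positivity)
  rw [ENNReal.mul_le_mul_iff_left (measure_ball_pos _ _ one_pos).ne' measure_ball_lt_top.ne,
    ← ENNReal.ofReal_natCast, ← ENNReal.ofReal_mul (by positivity),
    ENNReal.ofReal_le_ofReal_iff (by positivity)] at hvol
  exact hvol

theorem coveringNumber_le_of_subset_closedBall {x : E} {R δ : ℝ} (hR : 0 ≤ R) (hδ : 0 < δ)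
    (hA : A ⊆ closedBall x R) :
    (coveringNumber δ A : ℝ) ≤ ((4 * R + δ) / δ) ^ finrank ℝ E := by
  have hAtb := (isCompact_closedBall x R).totallyBounded.subset hA
  refine (Nat.cast_le.2 (coveringNumber_le_of_forall_separated_card_le hAtb hδ
    (M := ⌊((4 * R + δ) / δ) ^ finrank ℝ E⌋₊) fun t htA hsep => Nat.le_floor ?_)).trans
    (Nat.floor_le (by positivity))
  have := card_mul_pow_le_of_pairwise_le_dist t hR (r := δ / 4) (by positivity) (htA.trans hA)
    fun a ha b hb hab => by linarith [hsep ha hb hab]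
  rwa [show (4 * R + δ) / δ = (R + δ / 4) / (δ / 4) by field_simp, div_pow,
    le_div_iff₀ (by positivity)]

theorem eventually_coveringNumber_le_rpow_finrank_add_one (hA : Bornology.IsBounded A) :
    ∀ᶠ δ in 𝓝[>] (0 : ℝ), (coveringNumber δ A : ℝ) ≤ δ ^ (-(finrank ℝ E + 1 : ℝ)) := by
  obtain ⟨R, hR, hAR⟩ := hA.subset_closedBall_lt 0 0
  set c : ℝ := (4 * R + 1) ^ finrank ℝ E
  filter_upwards [Ioo_mem_nhdsGT (show 0 < min 1 c⁻¹ by positivity)] with δ ⟨hδ0, hδ⟩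
  have hδc : c ≤ δ⁻¹ := le_inv_of_le_inv₀ (by positivity) (hδ.le.trans (min_le_right _ _))
  calc (coveringNumber δ A : ℝ) ≤ ((4 * R + δ) / δ) ^ finrank ℝ E :=
        coveringNumber_le_of_subset_closedBall hR.le hδ0 hAR
    _ ≤ ((4 * R + 1) / δ) ^ finrank ℝ E := by
        gcongr; exact hδ.le.trans (min_le_left _ _)
    _ = c * δ⁻¹ ^ finrank ℝ E := by rw [div_pow, div_eq_mul_inv, inv_pow]
    _ ≤ δ⁻¹ * δ⁻¹ ^ finrank ℝ E := by gcongr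
    _ = δ ^ (-(finrank ℝ E + 1 : ℝ)) := by
        rw [Real.rpow_neg hδ0.le, ← Nat.cast_succ, Real.rpow_natCast, inv_pow, pow_succ', mul_inv]

/-- Without this bound the `limsup` defining `upperBoxDim` would be the junk value `0`. -/
theorem isBoundedUnder_log_coveringNumber_div (hA : Bornology.IsBounded A) :
    IsBoundedUnder (· ≤ ·) (𝓝[>] 0)
      fun δ : ℝ => Real.log (coveringNumber δ A) / Real.log (1 / δ) := by
  refine isBoundedUnder_of_eventually_le (a := finrank ℝ E + 1) ?_
  filter_upwards [eventually_coveringNumber_le_rpow_finrank_add_one hA,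
    Ioo_mem_nhdsGT one_pos] with δ hN ⟨hδ0, hδ1⟩
  rcases (Nat.zero_le (coveringNumber δ A)).eq_or_lt with h | h
  · rw [← h, Nat.cast_zero, Real.log_zero, zero_div]
    positivity
  · exact (log_div_log_one_div_le_iff (by exact_mod_cast h) hδ0 hδ1).2 hN

theorem eventually_coveringNumber_le_rpow (hA : Bornology.IsBounded A) {s : ℝ}
    (hs : upperBoxDim A < s) :
    ∀ᶠ δ in 𝓝[>] 0, (coveringNumber δ A : ℝ) ≤ δ ^ (-s) := by
  filter_upwards [eventually_lt_of_limsup_lt hs (isBoundedUnder_log_coveringNumber_div hA),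
    Ioo_mem_nhdsGT one_pos] with δ hlt ⟨hδ0, hδ1⟩
  rcases (Nat.zero_le (coveringNumber δ A)).eq_or_lt with h | h
  · rw [← h, Nat.cast_zero]
    positivity
  · exact (log_div_log_one_div_le_iff (by exact_mod_cast h) hδ0 hδ1).1 hlt.le

variable [MeasurableSpace E] [BorelSpace E] (μ : Measure E) [μ.IsAddHaarMeasure]

theorem eventually_measure_thickening_le (hA : Bornology.IsBounded A) {s : ℝ}
    (hs : upperBoxDim A < s) :
    ∀ᶠ ρ in 𝓝[>] 0, μ (thickening ρ A) ≤
      ENNReal.ofReal (2 ^ finrank ℝ E * μ.real (ball 0 1) * ρ ^ (finrank ℝ E - s)) := by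
  have hAtb : TotallyBounded A := hA.isCompact_closure.totallyBounded.subset subset_closure
  filter_upwards [eventually_coveringNumber_le_rpow hA hs, self_mem_nhdsWithin]
    with ρ hN (hρ : 0 < ρ)
  calc μ (thickening ρ A) ≤ coveringNumber ρ A * μ (ball 0 (2 * ρ)) :=
        measure_thickening_le_coveringNumber_mul μ hAtb hρ
    _ ≤ ENNReal.ofReal (ρ ^ (-s)) *
          (ENNReal.ofReal ((2 * ρ) ^ finrank ℝ E) * ENNReal.ofReal (μ.real (ball 0 1))) := by
        rw [μ.addHaar_ball_of_pos _ (by positivity), ofReal_measureReal measure_ball_lt_top.ne,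
          ← ENNReal.ofReal_natCast]
        gcongr
    _ = ENNReal.ofReal (2 ^ finrank ℝ E * μ.real (ball 0 1) * ρ ^ (finrank ℝ E - s)) := by
        rw [← ENNReal.ofReal_mul (by positivity), ← ENNReal.ofReal_mul (by positivity),
          Real.rpow_sub hρ, Real.rpow_neg hρ.le, Real.rpow_natCast, mul_pow]
        ring_nf

end FiniteDimensional

section LayerCake

variable {X : Type*} [PseudoMetricSpace X] {A : Set X}

theorem setOf_lt_infDist_rpow_neg_subset_thickening {β t : ℝ} (hβ : 0 < β) (ht : 0 < t) :
    {x | t < infDist x A ^ (-β)} ⊆ thickening (t ^ (-β⁻¹)) A := by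
  intro x (hx : t < infDist x A ^ (-β))
  -- `0 ^ (-β) = 0`, so points of `closure A` lie in no superlevel set.
  have hd : 0 < infDist x A := by
    refine infDist_nonneg.lt_of_ne fun h => ?_
    rw [← h, Real.zero_rpow (neg_ne_zero.2 hβ.ne')] at hx
    exact ht.not_gt hx
  have hA : A.Nonempty := nonempty_iff_ne_empty.2 fun h => by simp [h] at hd
  rw [mem_thickening_iff_infDist_lt hA]
  calc infDist x A = (infDist x A ^ (-β)) ^ (-β⁻¹) := by
        rw [← Real.rpow_mul hd.le, neg_mul_neg, mul_inv_cancel₀ hβ.ne', Real.rpow_one]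
    _ < t ^ (-β⁻¹) := Real.rpow_lt_rpow_of_neg ht hx (by simpa using hβ)

variable [MeasurableSpace X] [OpensMeasurableSpace X] {ν : Measure X} [IsFiniteMeasure ν]

theorem lintegral_infDist_rpow_neg_lt_top {β κ C : ℝ} (hβ : 0 < β) (hβκ : β < κ)
    (hA : ∀ᶠ ρ in 𝓝[>] 0, ν (thickening ρ A) ≤ ENNReal.ofReal (C * ρ ^ κ)) :
    ∫⁻ x, ENNReal.ofReal (infDist x A ^ (-β)) ∂ν < ∞ := by
  obtain ⟨ε, hε, hεA⟩ := (nhdsGT_basis 0).eventually_iff.1 hA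
  set T := ε ^ (-β)
  have hT : 0 < T := by positivity
  rw [lintegral_eq_lintegral_meas_lt ν (ae_of_all _ fun x => Real.rpow_nonneg infDist_nonneg _)
    (measurable_infDist.pow_const _).aemeasurable, ← Ioc_union_Ioi_eq_Ioi hT.le]
  refine (lintegral_union_le _ _ _).trans_lt (ENNReal.add_lt_top.2 ⟨?_, ?_⟩)
  · calc ∫⁻ t in Ioc 0 T, ν {x | t < infDist x A ^ (-β)}
        ≤ ∫⁻ t in Ioc 0 T, ν univ := lintegral_mono fun _ => measure_mono (subset_univ _)
      _ < ∞ := by simp [ENNReal.mul_lt_top, measure_lt_top]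
  · have hκβ : -(κ / β) < -1 := by rw [neg_lt_neg_iff, one_lt_div hβ]; exact hβκ
    refine lt_of_le_of_lt (setLIntegral_mono' measurableSet_Ioi fun t (ht : T < t) => ?_)
      (((integrableOn_Ioi_rpow_of_lt hκβ hT).const_mul C).lintegral_lt_top)
    have ht0 : 0 < t := hT.trans ht
    have hρ : t ^ (-β⁻¹) < ε := by
      calc t ^ (-β⁻¹) < T ^ (-β⁻¹) := Real.rpow_lt_rpow_of_neg hT ht (by simpa using hβ)
        _ = ε := by rw [← Real.rpow_mul hε.le, neg_mul_neg, mul_inv_cancel₀ hβ.ne', Real.rpow_one]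
    calc ν {x | t < infDist x A ^ (-β)} ≤ ν (thickening (t ^ (-β⁻¹)) A) :=
          measure_mono (setOf_lt_infDist_rpow_neg_subset_thickening hβ ht0)
      _ ≤ ENNReal.ofReal (C * (t ^ (-β⁻¹)) ^ κ) := hεA ⟨by positivity, hρ⟩
      _ = ENNReal.ofReal (C * t ^ (-(κ / β))) := by
          rw [← Real.rpow_mul ht0.le, neg_mul, inv_mul_eq_div]

theorem memLp_infDist_rpow_neg_of_measure_thickening_le {p γ κ C : ℝ} (hp : 0 < p) (hγ : 0 < γ)
    (hκ : p * γ < κ) (hA : ∀ᶠ ρ in 𝓝[>] 0, ν (thickening ρ A) ≤ ENNReal.ofReal (C * ρ ^ κ)) :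
    MemLp (fun x => infDist x A ^ (-γ)) (ENNReal.ofReal p) ν := by
  refine ⟨(measurable_infDist.pow_const _).aestronglyMeasurable, ?_⟩
  rw [eLpNorm_lt_top_iff_lintegral_rpow_enorm_lt_top (by simpa using hp) ENNReal.ofReal_ne_top,
    ENNReal.toReal_ofReal hp.le]
  have hpow (x : X) : ‖infDist x A ^ (-γ)‖ₑ ^ p = ENNReal.ofReal (infDist x A ^ (-(p * γ))) := by
    have hd := Real.rpow_nonneg (infDist_nonneg (x := x) (s := A)) (-γ)
    rw [Real.enorm_of_nonneg hd, ENNReal.ofReal_rpow_of_nonneg hd hp.le,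
      ← Real.rpow_mul infDist_nonneg, neg_mul, mul_comm]
  simpa only [hpow] using lintegral_infDist_rpow_neg_lt_top (mul_pos hp hγ) hκ hA

end LayerCake

theorem memLp_infDist_rpow_general {N : ℕ} (Ω : Set (EuclideanSpace ℝ (Fin N)))
    (hΩb : Bornology.IsBounded Ω)
    (A : Set (EuclideanSpace ℝ (Fin N)))
    (hAb : Bornology.IsBounded A)
    (p γ : ℝ) (hp : 1 < p) (hγ : 0 < γ)
    (hγdim : γ < (1 / p) * ((N : ℝ) - upperBoxDim A)) :
    MeasureTheory.MemLp (fun x => Metric.infDist x A ^ (-γ)) (ENNReal.ofReal p)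
      (MeasureTheory.volume.restrict Ω) := by
  have hp0 : 0 < p := one_pos.trans hp
  have hpγ : p * γ < N - upperBoxDim A := by
    rwa [one_div, inv_mul_eq_div, lt_div_iff₀' hp0] at hγdim
  obtain ⟨s, hAs, hsγ⟩ := exists_between (show upperBoxDim A < N - p * γ by linarith)
  have : IsFiniteMeasure (volume.restrict Ω) := isFiniteMeasure_restrict.2 hΩb.measure_lt_top.ne
  have hthick : ∀ᶠ ρ in 𝓝[>] 0, volume.restrict Ω (thickening ρ A) ≤ ENNReal.ofReal
      (2 ^ N * volume.real (ball (0 : EuclideanSpace ℝ (Fin N)) 1) * ρ ^ ((N : ℝ) - s)) := by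
    filter_upwards [eventually_measure_thickening_le volume hAb hAs] with ρ hρ
    simpa only [finrank_euclideanSpace_fin] using (Measure.restrict_apply_le _ _).trans hρ
  exact memLp_infDist_rpow_neg_of_measure_thickening_le hp0 hγ (by linarith) hthick

/-- Harvey–Polking criterion, `Lᵖ` version. -/
theorem memLp_infDist_rpow {N : ℕ} (Ω : Set (EuclideanSpace ℝ (Fin N)))
    (hΩo : IsOpen Ω) (hΩb : Bornology.IsBounded Ω)
    (A : Set (EuclideanSpace ℝ (Fin N))) (hAne : A.Nonempty)
    (hAb : Bornology.IsBounded A) (hAΩ : closure A ⊆ Ω) (hA0 : MeasureTheory.volume A = 0)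
    (p γ : ℝ) (hp : 1 < p) (hγ : 0 < γ)
    (hγdim : γ < (1 / p) * ((N : ℝ) - upperBoxDim A)) :
    MeasureTheory.MemLp (fun x => Metric.infDist x A ^ (-γ)) (ENNReal.ofReal p)
      (MeasureTheory.volume.restrict Ω) :=
  memLp_infDist_rpow_general Ω hΩb A hAb p γ hp hγ hγdim
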